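/- arXiv:1603.05237 — 3 statements merged into one kernel-verified Lean document; each statement's English description precedes it below -/
import Mathlib

section
/- Let n be a positive integer and let F be a family of subsets of {1,...,n} with the property that for every two distinct A, B in F there exists k in {0,...,n} such that (A ∩ {1,...,k} ⊆ B ∩ {1,...,k} or B ∩ {1,...,k} ⊆ A ∩ {1,...,k}) and (A ∩ {k+1,...,n} ⊆ B ∩ {k+1,...,n} or B ∩ {k+1,...,n} ⊆ A ∩ {k+1,...,n}). Then |F| ≤ n^3 + 1 (in particular |F| is at most polynomial in n). -/
/-!
On a bi-chain, `A ↦ (#A, ∑ A)` is injective. Let `A ≠ B` have the same size and split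
`{1,…,n}` at the `k` given by the bi-chain condition. If the inclusions on the two halves point
the same way, then `A ⊆ B` (or `B ⊆ A`), so `A = B` by size. If they point in opposite ways, say
`A ⊆ B` below `k` and `B ⊆ A` above `k`, then `A \ B` lies above `k`, `B \ A` lies below `k`,
and the two differences have the same size, so `∑ B < ∑ A`. There are at most
`(n + 1) (n (n + 1) / 2 + 1) ≤ n ^ 3 + 1` such pairs once `n ≥ 3`; for `n ≤ 2` the trivial
bound `2 ^ n` suffices.
-/

open Finset

namespace Bichain

variable {A B : Finset ℕ} {n k : ℕ}

lemma sum_lt_sum_of_sdiff_le_lt (hcard : #A = #B) (hne : A ≠ B)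
    (hBA : ∀ x ∈ B \ A, x ≤ k) (hAB : ∀ x ∈ A \ B, k < x) :
    ∑ x ∈ B, x < ∑ x ∈ A, x := by
  have hsize : #(A \ B) = #(B \ A) := card_sdiff_comm hcard
  have hpos : 0 < #(A \ B) := card_pos.2 <| sdiff_nonempty.2 fun hsub =>
    hne (eq_of_subset_of_card_le hsub hcard.ge)
  have hdiff : ∑ x ∈ B \ A, x < ∑ x ∈ A \ B, x :=
    calc ∑ x ∈ B \ A, x ≤ #(B \ A) * k := by simpa using sum_le_card_nsmul _ _ _ hBA
      _ = #(A \ B) * k := by rw [hsize]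
      _ < #(A \ B) * (k + 1) := Nat.mul_lt_mul_of_pos_left k.lt_succ_self hpos
      _ ≤ ∑ x ∈ A \ B, x := by
        simpa using card_nsmul_le_sum _ _ _ fun x hx => Nat.succ_le_of_lt (hAB x hx)
  rw [← sum_inter_add_sum_sdiff A B, ← sum_inter_add_sum_sdiff B A, inter_comm B A]
  omega

lemma subset_of_inter_Icc_subset (hA : A ⊆ Icc 1 n)
    (hlow : A ∩ Icc 1 k ⊆ B ∩ Icc 1 k) (hhigh : A ∩ Icc (k + 1) n ⊆ B ∩ Icc (k + 1) n) :
    A ⊆ B := by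
  intro x hx
  have hxn := mem_Icc.1 (hA hx)
  rcases le_or_gt x k with hxk | hxk
  · exact mem_of_mem_inter_left (hlow (mem_inter.2 ⟨hx, mem_Icc.2 ⟨hxn.1, hxk⟩⟩))
  · exact mem_of_mem_inter_left (hhigh (mem_inter.2 ⟨hx, mem_Icc.2 ⟨hxk, hxn.2⟩⟩))

lemma sum_lt_sum_of_inter_Icc_subset (hA : A ⊆ Icc 1 n) (hB : B ⊆ Icc 1 n)
    (hcard : #A = #B) (hne : A ≠ B)
    (hlow : A ∩ Icc 1 k ⊆ B ∩ Icc 1 k) (hhigh : B ∩ Icc (k + 1) n ⊆ A ∩ Icc (k + 1) n) :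
    ∑ x ∈ B, x < ∑ x ∈ A, x := by
  refine sum_lt_sum_of_sdiff_le_lt hcard hne (k := k) (fun x hx => ?_) (fun x hx => ?_)
  · obtain ⟨hxB, hxA⟩ := mem_sdiff.1 hx
    by_contra! hkx
    have hxn := (mem_Icc.1 (hB hxB)).2
    exact hxA (mem_of_mem_inter_left (hhigh (mem_inter.2 ⟨hxB, mem_Icc.2 ⟨hkx, hxn⟩⟩)))
  · obtain ⟨hxA, hxB⟩ := mem_sdiff.1 hx
    by_contra! hxk
    have hx1 := (mem_Icc.1 (hA hxA)).1
    exact hxB (mem_of_mem_inter_left (hlow (mem_inter.2 ⟨hxA, mem_Icc.2 ⟨hx1, hxk⟩⟩)))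

lemma eq_of_card_eq_of_sum_eq (hA : A ⊆ Icc 1 n) (hB : B ⊆ Icc 1 n)
    (hcard : #A = #B) (hsum : ∑ x ∈ A, x = ∑ x ∈ B, x)
    (hlow : A ∩ Icc 1 k ⊆ B ∩ Icc 1 k ∨ B ∩ Icc 1 k ⊆ A ∩ Icc 1 k)
    (hhigh : A ∩ Icc (k + 1) n ⊆ B ∩ Icc (k + 1) n ∨
      B ∩ Icc (k + 1) n ⊆ A ∩ Icc (k + 1) n) :
    A = B := by
  wlog hlowAB : A ∩ Icc 1 k ⊆ B ∩ Icc 1 k generalizing A B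
  · exact (this hB hA hcard.symm hsum.symm hlow.symm hhigh.symm
      (hlow.resolve_left hlowAB)).symm
  by_contra hne
  rcases hhigh with hhighAB | hhighBA
  · exact hne (eq_of_subset_of_card_le (subset_of_inter_Icc_subset hA hlowAB hhighAB) hcard.ge)
  · exact (sum_lt_sum_of_inter_Icc_subset hA hB hcard hne hlowAB hhighBA).ne' hsum

lemma card_le_two_pow {F : Finset (Finset ℕ)} (hsub : ∀ A ∈ F, A ⊆ Icc 1 n) :
    #F ≤ 2 ^ n := by
  simpa using card_le_card fun A hA => mem_powerset.2 (hsub A hA)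

lemma card_sum_mem_range (hA : A ⊆ Icc 1 n) :
    (#A, ∑ x ∈ A, x) ∈ range (n + 1) ×ˢ range (∑ i ∈ range (n + 1), i + 1) := by
  have hcard : #A ≤ n := by simpa using card_le_card hA
  have hsum : ∑ x ∈ A, x ≤ ∑ i ∈ range (n + 1), i :=
    sum_le_sum_of_subset (hA.trans fun x hx => mem_range.2 (Nat.lt_succ_of_le (mem_Icc.1 hx).2))
  simp only [mem_product, mem_range]
  omega

lemma succ_mul_sum_range_succ_le (hn : 3 ≤ n) :
    (n + 1) * (∑ i ∈ range (n + 1), i + 1) ≤ n ^ 3 + 1 := by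
  have hgauss := sum_range_id_mul_two (n + 1)
  simp only [Nat.add_sub_cancel] at hgauss
  have hcube : 3 * (n * (n + 1)) ≤ n * (n * (n + 1)) := Nat.mul_le_mul_right _ hn
  nlinarith

end Bichain

open Bichain in
theorem bichain_card_le_general (n : ℕ) (F : Finset (Finset ℕ))
    (hsub : ∀ A ∈ F, A ⊆ Finset.Icc 1 n)
    (hbi : ∀ A ∈ F, ∀ B ∈ F, A ≠ B → ∃ k ≤ n,
      (A ∩ Finset.Icc 1 k ⊆ B ∩ Finset.Icc 1 k ∨
        B ∩ Finset.Icc 1 k ⊆ A ∩ Finset.Icc 1 k) ∧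
      (A ∩ Finset.Icc (k+1) n ⊆ B ∩ Finset.Icc (k+1) n ∨
        B ∩ Finset.Icc (k+1) n ⊆ A ∩ Finset.Icc (k+1) n)) :
    F.card ≤ n ^ 3 + 1 := by
  rcases le_or_gt n 2 with hsmall | hlarge
  · calc F.card ≤ 2 ^ n := card_le_two_pow hsub
      _ ≤ n ^ 3 + 1 := by interval_cases n <;> norm_num
  have hinj : Set.InjOn (fun A : Finset ℕ => (#A, ∑ x ∈ A, x)) F := by
    intro A hA B hB hAB
    obtain ⟨hcard, hsum⟩ := Prod.mk.inj hAB
    by_contra hne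
    obtain ⟨k, -, hlow, hhigh⟩ := hbi A hA B hB hne
    exact hne (eq_of_card_eq_of_sum_eq (hsub A hA) (hsub B hB) hcard hsum hlow hhigh)
  calc F.card ≤ #(range (n + 1) ×ˢ range (∑ i ∈ range (n + 1), i + 1)) :=
        card_le_card_of_injOn _ (fun A hA => card_sum_mem_range (hsub A hA)) hinj
    _ = (n + 1) * (∑ i ∈ range (n + 1), i + 1) := by rw [card_product, card_range, card_range]
    _ ≤ n ^ 3 + 1 := succ_mul_sum_range_succ_le hlarge

/-- Sauer–Shelah-type bound for bi-chains: a bi-chain family of subsets of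
`{1,...,n}` has at most `n^3 + 1` members. -/
theorem bichain_card_le (n : ℕ) (hn : 1 ≤ n) (F : Finset (Finset ℕ))
    (hsub : ∀ A ∈ F, A ⊆ Finset.Icc 1 n)
    (hbi : ∀ A ∈ F, ∀ B ∈ F, A ≠ B → ∃ k ≤ n,
      (A ∩ Finset.Icc 1 k ⊆ B ∩ Finset.Icc 1 k ∨
        B ∩ Finset.Icc 1 k ⊆ A ∩ Finset.Icc 1 k) ∧
      (A ∩ Finset.Icc (k+1) n ⊆ B ∩ Finset.Icc (k+1) n ∨
        B ∩ Finset.Icc (k+1) n ⊆ A ∩ Finset.Icc (k+1) n)) :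
    F.card ≤ n ^ 3 + 1 :=
  bichain_card_le_general n F hsub hbi
end

section
/- Let F be a bi-chain family of subsets of {1,...,n} (as defined in the context), and let A, B be two distinct members of F with |A| = |B|. Then the sum of the elements of A is different from the sum of the elements of B. -/
open Finset

lemma bichain_key (k : ℕ) (A1 A2 B1 B2 : Finset ℕ)
    (h1 : A1 ⊆ B1) (h2 : B2 ⊆ A2)
    (hB1 : ∀ x ∈ B1, x ≤ k) (hA2 : ∀ x ∈ A2, k + 1 ≤ x)
    (hcard : A1.card + A2.card = B1.card + B2.card)
    (hne : ¬(A1 = B1 ∧ A2 = B2)) :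
    (∑ x ∈ B1, x) + ∑ x ∈ B2, x < (∑ x ∈ A1, x) + ∑ x ∈ A2, x := by
  have hc1 : A1.card ≤ B1.card := card_le_card h1
  have hc2 : B2.card ≤ A2.card := card_le_card h2
  set d := B1.card - A1.card with hd
  have hd2 : A2.card - B2.card = d := by omega
  have hdpos : 1 ≤ d := by
    rcases Nat.eq_zero_or_pos d with h0 | h; swap; · exact h
    exfalso
    have e1 : A1 = B1 := eq_of_subset_of_card_le h1 (by omega)
    have e2 : B2 = A2 := eq_of_subset_of_card_le h2 (by omega)
    exact hne ⟨e1, e2.symm⟩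
  have hs1 : (∑ x ∈ B1 \ A1, x) + ∑ x ∈ A1, x = ∑ x ∈ B1, x := sum_sdiff h1
  have hs2 : (∑ x ∈ A2 \ B2, x) + ∑ x ∈ B2, x = ∑ x ∈ A2, x := sum_sdiff h2
  have hcd1 : (B1 \ A1).card = d := by rw [card_sdiff_of_subset h1]
  have hcd2 : (A2 \ B2).card = d := by rw [card_sdiff_of_subset h2, hd2]
  have hub : (∑ x ∈ B1 \ A1, x) ≤ d * k := by
    have := sum_le_card_nsmul (B1 \ A1) (fun x => x) k
      (fun x hx => hB1 x (sdiff_subset hx))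
    simpa [hcd1, smul_eq_mul] using this
  have hlb : d * (k + 1) ≤ ∑ x ∈ A2 \ B2, x := by
    have := card_nsmul_le_sum (A2 \ B2) (fun x => x) (k + 1)
      (fun x hx => hA2 x (sdiff_subset hx))
    simpa [hcd2, smul_eq_mul] using this
  have : d * k < d * (k + 1) := by nlinarith
  omega

/-- In a bi-chain family, two distinct members of the same cardinality have
different element sums. -/
theorem bichain_sum_ne (n : ℕ) (F : Finset (Finset ℕ))
    (hsub : ∀ A ∈ F, A ⊆ Finset.Icc 1 n)
    (hbi : ∀ A ∈ F, ∀ B ∈ F, A ≠ B → ∃ k ≤ n,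
      (A ∩ Finset.Icc 1 k ⊆ B ∩ Finset.Icc 1 k ∨
        B ∩ Finset.Icc 1 k ⊆ A ∩ Finset.Icc 1 k) ∧
      (A ∩ Finset.Icc (k+1) n ⊆ B ∩ Finset.Icc (k+1) n ∨
        B ∩ Finset.Icc (k+1) n ⊆ A ∩ Finset.Icc (k+1) n))
    (A : Finset ℕ) (hA : A ∈ F) (B : Finset ℕ) (hB : B ∈ F)
    (hne : A ≠ B) (hcard : A.card = B.card) :
    (∑ x ∈ A, x) ≠ ∑ x ∈ B, x := by
  obtain ⟨k, hk, h1, h2⟩ := hbi A hA B hB hne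
  have decomp : ∀ C : Finset ℕ, C ⊆ Finset.Icc 1 n →
      (C ∩ Finset.Icc 1 k) ∪ (C ∩ Finset.Icc (k+1) n) = C ∧
      Disjoint (C ∩ Finset.Icc 1 k) (C ∩ Finset.Icc (k+1) n) := by
    intro C hC
    constructor
    · ext x
      simp only [mem_union, mem_inter, mem_Icc]
      constructor
      · rintro (⟨h, _⟩ | ⟨h, _⟩) <;> exact h
      · intro hx
        have hxn := hC hx
        simp only [mem_Icc] at hxn
        by_cases hxk : x ≤ k
        · exact Or.inl ⟨hx, hxn.1, hxk⟩
        · exact Or.inr ⟨hx, by omega, hxn.2⟩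
    · rw [disjoint_left]
      intro x hx hx'
      simp only [mem_inter, mem_Icc] at hx hx'
      omega
  obtain ⟨hAu, hAd⟩ := decomp A (hsub A hA)
  obtain ⟨hBu, hBd⟩ := decomp B (hsub B hB)
  have hAsum : (∑ x ∈ A, x) = (∑ x ∈ A ∩ Finset.Icc 1 k, x)
      + ∑ x ∈ A ∩ Finset.Icc (k+1) n, x := by conv_lhs => rw [← hAu, sum_union hAd]
  have hBsum : (∑ x ∈ B, x) = (∑ x ∈ B ∩ Finset.Icc 1 k, x)
      + ∑ x ∈ B ∩ Finset.Icc (k+1) n, x := by conv_lhs => rw [← hBu, sum_union hBd]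
  have hAcard : A.card = (A ∩ Finset.Icc 1 k).card
      + (A ∩ Finset.Icc (k+1) n).card := by conv_lhs => rw [← hAu, card_union_of_disjoint hAd]
  have hBcard : B.card = (B ∩ Finset.Icc 1 k).card
      + (B ∩ Finset.Icc (k+1) n).card := by conv_lhs => rw [← hBu, card_union_of_disjoint hBd]
  have hmem1 : ∀ C : Finset ℕ, ∀ x ∈ C ∩ Finset.Icc 1 k, x ≤ k := by
    intro C x hx; simp only [mem_inter, mem_Icc] at hx; omega
  have hmem2 : ∀ C : Finset ℕ, ∀ x ∈ C ∩ Finset.Icc (k+1) n, k + 1 ≤ x := by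
    intro C x hx; simp only [mem_inter, mem_Icc] at hx; omega
  rcases h1 with h1 | h1 <;> rcases h2 with h2 | h2
  · -- A ⊆ B, contradiction
    exfalso
    apply hne
    apply eq_of_subset_of_card_le _ (le_of_eq hcard.symm)
    rw [← hAu, ← hBu]
    exact union_subset_union h1 h2
  · -- A1 ⊆ B1, B2 ⊆ A2 : sum B < sum A
    have key := bichain_key k (A ∩ Finset.Icc 1 k) (A ∩ Finset.Icc (k+1) n)
      (B ∩ Finset.Icc 1 k) (B ∩ Finset.Icc (k+1) n) h1 h2
      (hmem1 B) (hmem2 A) (by omega)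
      (by rintro ⟨e1, e2⟩; exact hne (by rw [← hAu, ← hBu, e1, e2]))
    omega
  · -- B1 ⊆ A1, A2 ⊆ B2 : sum A < sum B
    have key := bichain_key k (B ∩ Finset.Icc 1 k) (B ∩ Finset.Icc (k+1) n)
      (A ∩ Finset.Icc 1 k) (A ∩ Finset.Icc (k+1) n) h1 h2
      (hmem1 A) (hmem2 B) (by omega)
      (by rintro ⟨e1, e2⟩; exact hne (by rw [← hAu, ← hBu, e1, e2]))
    omega
  · -- B ⊆ A, contradiction
    exfalso
    apply hne
    symm
    apply eq_of_subset_of_card_le _ (le_of_eq hcard)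
    rw [← hAu, ← hBu]
    exact union_subset_union h1 h2
end

section
/- Let F be a bi-chain family of subsets of {1,...,n}. Then no 3-element subset T of {1,...,n} is shattered by F, i.e., there is no T with |T| = 3 such that every subset of T equals A ∩ T for some A in F. -/
lemma bichain_aux (n : ℕ) (F : Finset (Finset ℕ)) (T : Finset ℕ)
    (hT : T ⊆ Finset.Icc 1 n)
    (hbi : ∀ A ∈ F, ∀ B ∈ F, A ≠ B → ∃ k ≤ n,
      (A ∩ Finset.Icc 1 k ⊆ B ∩ Finset.Icc 1 k ∨
        B ∩ Finset.Icc 1 k ⊆ A ∩ Finset.Icc 1 k) ∧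
      (A ∩ Finset.Icc (k+1) n ⊆ B ∩ Finset.Icc (k+1) n ∨
        B ∩ Finset.Icc (k+1) n ⊆ A ∩ Finset.Icc (k+1) n))
    (a b c : ℕ) (ha : a ∈ T) (hb : b ∈ T) (hc : c ∈ T)
    (hab : a < b) (hbc : b < c)
    (hsh : ∀ S ⊆ T, ∃ A ∈ F, A ∩ T = S) : False := by
  have haI := hT ha; have hbI := hT hb; have hcI := hT hc
  simp only [Finset.mem_Icc] at haI hbI hcI
  obtain ⟨A, hA, hAT⟩ := hsh {a, c} (by
    intro x hx
    simp only [Finset.mem_insert, Finset.mem_singleton] at hx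
    rcases hx with rfl | rfl <;> assumption)
  obtain ⟨B, hB, hBT⟩ := hsh {b} (by
    intro x hx
    simp only [Finset.mem_singleton] at hx
    subst hx; assumption)
  have haA : a ∈ A := by
    have : a ∈ A ∩ T := hAT ▸ (by simp)
    exact (Finset.mem_inter.mp this).1
  have hcA : c ∈ A := by
    have : c ∈ A ∩ T := hAT ▸ (by simp)
    exact (Finset.mem_inter.mp this).1
  have hbB : b ∈ B := by
    have : b ∈ B ∩ T := hBT ▸ (by simp)
    exact (Finset.mem_inter.mp this).1
  have hbA : b ∉ A := by
    intro h
    have : b ∈ ({a, c} : Finset ℕ) := hAT ▸ Finset.mem_inter.mpr ⟨h, hb⟩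
    simp only [Finset.mem_insert, Finset.mem_singleton] at this
    omega
  have haB : a ∉ B := by
    intro h
    have : a ∈ ({b} : Finset ℕ) := hBT ▸ Finset.mem_inter.mpr ⟨h, ha⟩
    simp only [Finset.mem_singleton] at this
    omega
  have hcB : c ∉ B := by
    intro h
    have : c ∈ ({b} : Finset ℕ) := hBT ▸ Finset.mem_inter.mpr ⟨h, hc⟩
    simp only [Finset.mem_singleton] at this
    omega
  have hne : A ≠ B := fun h => hbA (h ▸ hbB)
  obtain ⟨k, hk, hpre, hsuf⟩ := hbi A hA B hB hne
  by_cases hkb : b ≤ k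
  · rcases hpre with h | h
    · have : a ∈ B ∩ Finset.Icc 1 k := h (Finset.mem_inter.mpr ⟨haA, Finset.mem_Icc.mpr ⟨haI.1, by omega⟩⟩)
      exact haB (Finset.mem_inter.mp this).1
    · have : b ∈ A ∩ Finset.Icc 1 k := h (Finset.mem_inter.mpr ⟨hbB, Finset.mem_Icc.mpr ⟨hbI.1, hkb⟩⟩)
      exact hbA (Finset.mem_inter.mp this).1
  · rcases hsuf with h | h
    · have : c ∈ B ∩ Finset.Icc (k+1) n := h (Finset.mem_inter.mpr ⟨hcA, Finset.mem_Icc.mpr ⟨by omega, hcI.2⟩⟩)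
      exact hcB (Finset.mem_inter.mp this).1
    · have : b ∈ A ∩ Finset.Icc (k+1) n := h (Finset.mem_inter.mpr ⟨hbB, Finset.mem_Icc.mpr ⟨by omega, hbI.2⟩⟩)
      exact hbA (Finset.mem_inter.mp this).1

/-- A bi-chain family shatters no set of size 3. -/
theorem bichain_no_shatter (n : ℕ) (F : Finset (Finset ℕ))
    (hsub : ∀ A ∈ F, A ⊆ Finset.Icc 1 n)
    (hbi : ∀ A ∈ F, ∀ B ∈ F, A ≠ B → ∃ k ≤ n,
      (A ∩ Finset.Icc 1 k ⊆ B ∩ Finset.Icc 1 k ∨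
        B ∩ Finset.Icc 1 k ⊆ A ∩ Finset.Icc 1 k) ∧
      (A ∩ Finset.Icc (k+1) n ⊆ B ∩ Finset.Icc (k+1) n ∨
        B ∩ Finset.Icc (k+1) n ⊆ A ∩ Finset.Icc (k+1) n)) :
    ¬ ∃ T : Finset ℕ, T ⊆ Finset.Icc 1 n ∧ T.card = 3 ∧
      ∀ S ⊆ T, ∃ A ∈ F, A ∩ T = S := by
  rintro ⟨T, hT, hcard, hsh⟩
  obtain ⟨x, y, z, hxy, hxz, hyz, rfl⟩ := Finset.card_eq_three.mp hcard
  have hx : x ∈ ({x, y, z} : Finset ℕ) := by simp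
  have hy : y ∈ ({x, y, z} : Finset ℕ) := by simp
  have hz : z ∈ ({x, y, z} : Finset ℕ) := by simp
  rcases hxy.lt_or_gt with h1 | h1 <;> rcases hxz.lt_or_gt with h2 | h2 <;>
    rcases hyz.lt_or_gt with h3 | h3
  · exact bichain_aux n F _ hT hbi x y z hx hy hz h1 h3 hsh
  · exact bichain_aux n F _ hT hbi x z y hx hz hy h2 h3 hsh
  · exact bichain_aux n F _ hT hbi z x y hz hx hy h2 h1 hsh
  · exact bichain_aux n F _ hT hbi z x y hz hx hy h2 h1 hsh
  · exact bichain_aux n F _ hT hbi y x z hy hx hz h1 h2 hsh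
  · omega
  · exact bichain_aux n F _ hT hbi y z x hy hz hx h3 h2 hsh
  · exact bichain_aux n F _ hT hbi z y x hz hy hx h3 h1 hsh
end
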